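/- arXiv:physics/9711027 — 11 statements merged into one kernel-verified Lean document; each statement's English description precedes it below -/
import Mathlib

section
/- Let F : ℝ² → ℝ and G : ℝ² → ℝ be twice continuously differentiable (arguments F(x,v), G(x,y)) with ∂F/∂v(x,v) ≠ 0 everywhere, let μ̃ : ℝ → ℝ be nonvanishing, and define Φ(x,y,v) := −(F_x(x,v) + G_x(x,y) + G_y(x,y)·v)/F_v(x,v) and 𝓕(x,v) := F_v(x,v)/μ̃(x). Writing Φ_y := ∂Φ/∂y, the following identities hold for all (x,y,v): (i) ∂/∂v [ Φ_y(x,y,v)·𝓕(x,v) ] = −G_yy(x,y)/μ̃(x), and (ii) Φ_y(x,y,v)·𝓕(x,v) − v·∂/∂v[ Φ_y(x,y,v)·𝓕(x,v) ] = −G_xy(x,y)/μ̃(x). In particular, these two expressions built from Φ and 𝓕 do not depend on v. -/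
open Function

lemma mixed_derivs (G : ℝ → ℝ → ℝ) (hG : ContDiff ℝ 2 (Function.uncurry G)) (x y : ℝ) :
    ∃ a b : ℝ,
      HasDerivAt (fun z => deriv (fun t => G t z) x) a y ∧
      HasDerivAt (fun z => deriv (G x) z) b y ∧
      deriv (fun t => deriv (G t) y) x = a ∧
      deriv (fun z => deriv (G x) z) y = b := by
  set f := Function.uncurry G with hf
  have hdf : Differentiable ℝ f := hG.differentiable two_ne_zero
  have hdf' : Differentiable ℝ (fderiv ℝ f) :=
    (hG.fderiv_right (m := 1) le_rfl).differentiable one_ne_zero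
  set D2 := fderiv ℝ (fderiv ℝ f) (x, y) with hD2
  have hsymm : ∀ v w : ℝ × ℝ, D2 v w = D2 w v :=
    second_derivative_symmetric (fun p => (hdf p).hasFDerivAt) ((hdf' (x, y)).hasFDerivAt)
  -- partial derivatives expressed via fderiv
  have hx' : ∀ p : ℝ × ℝ, deriv (fun t => G t p.2) p.1 = fderiv ℝ f p ((1 : ℝ), (0 : ℝ)) := by
    intro p
    have hline : HasDerivAt (fun t : ℝ => (t, p.2)) ((1 : ℝ), (0 : ℝ)) p.1 :=
      HasDerivAt.prodMk (hasDerivAt_id p.1) (hasDerivAt_const p.1 p.2)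
    have h := ((hdf p).hasFDerivAt).comp_hasDerivAt p.1 hline
    exact h.deriv
  have hy' : ∀ p : ℝ × ℝ, deriv (G p.1) p.2 = fderiv ℝ f p ((0 : ℝ), (1 : ℝ)) := by
    intro p
    have hline : HasDerivAt (fun z : ℝ => (p.1, z)) ((0 : ℝ), (1 : ℝ)) p.2 :=
      HasDerivAt.prodMk (hasDerivAt_const p.2 p.1) (hasDerivAt_id p.2)
    have h := ((hdf p).hasFDerivAt).comp_hasDerivAt p.2 hline
    exact h.deriv
  -- derivative of z ↦ fderiv f (x,z)
  have hz : HasDerivAt (fun z => fderiv ℝ f (x, z)) (D2 ((0 : ℝ), (1 : ℝ))) y :=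
    ((hdf' (x, y)).hasFDerivAt).comp_hasDerivAt y
      (HasDerivAt.prodMk (hasDerivAt_const y x) (hasDerivAt_id y))
  have ht : HasDerivAt (fun t => fderiv ℝ f (t, y)) (D2 ((1 : ℝ), (0 : ℝ))) x :=
    ((hdf' (x, y)).hasFDerivAt).comp_hasDerivAt x
      (HasDerivAt.prodMk (hasDerivAt_id x) (hasDerivAt_const x y))
  refine ⟨D2 ((1 : ℝ), (0 : ℝ)) ((0 : ℝ), (1 : ℝ)), D2 ((0 : ℝ), (1 : ℝ)) ((0 : ℝ), (1 : ℝ)),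
    ?_, ?_, ?_, ?_⟩
  · have h1 : HasDerivAt (fun z => fderiv ℝ f (x, z) ((1 : ℝ), (0 : ℝ)))
        (D2 ((0 : ℝ), (1 : ℝ)) ((1 : ℝ), (0 : ℝ))) y := by
      simpa using hz.clm_apply (hasDerivAt_const y ((1 : ℝ), (0 : ℝ)))
    have : (fun z => deriv (fun t => G t z) x) =
        fun z => fderiv ℝ f (x, z) ((1 : ℝ), (0 : ℝ)) := funext fun z => hx' (x, z)
    rw [this, hsymm]
    exact h1
  · have h2 : HasDerivAt (fun z => fderiv ℝ f (x, z) ((0 : ℝ), (1 : ℝ)))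
        (D2 ((0 : ℝ), (1 : ℝ)) ((0 : ℝ), (1 : ℝ))) y := by
      simpa using hz.clm_apply (hasDerivAt_const y ((0 : ℝ), (1 : ℝ)))
    have : (fun z => deriv (G x) z) =
        fun z => fderiv ℝ f (x, z) ((0 : ℝ), (1 : ℝ)) := funext fun z => hy' (x, z)
    rw [this]
    exact h2
  · have h3 : HasDerivAt (fun t => fderiv ℝ f (t, y) ((0 : ℝ), (1 : ℝ)))
        (D2 ((1 : ℝ), (0 : ℝ)) ((0 : ℝ), (1 : ℝ))) x := by
      simpa using ht.clm_apply (hasDerivAt_const x ((0 : ℝ), (1 : ℝ)))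
    have he : (fun t => deriv (G t) y) =
        fun t => fderiv ℝ f (t, y) ((0 : ℝ), (1 : ℝ)) := funext fun t => hy' (t, y)
    rw [he]
    exact h3.deriv
  · have h2 : HasDerivAt (fun z => fderiv ℝ f (x, z) ((0 : ℝ), (1 : ℝ)))
        (D2 ((0 : ℝ), (1 : ℝ)) ((0 : ℝ), (1 : ℝ))) y := by
      simpa using hz.clm_apply (hasDerivAt_const y ((0 : ℝ), (1 : ℝ)))
    have : (fun z => deriv (G x) z) =
        fun z => fderiv ℝ f (x, z) ((0 : ℝ), (1 : ℝ)) := funext fun z => hy' (x, z)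
    rw [this]
    exact h2.deriv

/-- For `Φ := −(F_x + G_x + G_y·v)/F_v` and `𝓕(x,v) := F_v(x,v)/μ̃(x)`, writing
`Φ_y := ∂Φ/∂y`, one has (i) `∂/∂v[Φ_y·𝓕] = −G_yy/μ̃(x)` and
(ii) `Φ_y·𝓕 − v·∂/∂v[Φ_y·𝓕] = −G_xy/μ̃(x)`; in particular neither expression
depends on `v`. -/
theorem stmt5
    (F G : ℝ → ℝ → ℝ)
    (hF : ContDiff ℝ 2 (Function.uncurry F))
    (hG : ContDiff ℝ 2 (Function.uncurry G))
    (hFv : ∀ x v, deriv (F x) v ≠ 0)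
    (μt : ℝ → ℝ) (hμt : ∀ x, μt x ≠ 0)
    (Φ : ℝ → ℝ → ℝ → ℝ)
    (hΦ : ∀ x y v, Φ x y v =
      -(deriv (fun t => F t v) x + deriv (fun t => G t y) x + deriv (G x) y * v)
        / deriv (F x) v)
    (𝓕 : ℝ → ℝ → ℝ)
    (h𝓕 : ∀ x v, 𝓕 x v = deriv (F x) v / μt x) :
    (∀ x y v : ℝ,
      deriv (fun w => deriv (fun z => Φ x z w) y * 𝓕 x w) v =
        -(deriv (fun z => deriv (G x) z) y) / μt x) ∧
    (∀ x y v : ℝ,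
      deriv (fun z => Φ x z v) y * 𝓕 x v
          - v * deriv (fun w => deriv (fun z => Φ x z w) y * 𝓕 x w) v =
        -(deriv (fun t => deriv (G t) y) x) / μt x) := by
  have key : ∀ x y : ℝ,
      (∀ w : ℝ, deriv (fun z => Φ x z w) y * 𝓕 x w =
        -(deriv (fun t => deriv (G t) y) x + deriv (fun z => deriv (G x) z) y * w) / μt x) ∧
      (∀ v : ℝ, deriv (fun w => deriv (fun z => Φ x z w) y * 𝓕 x w) v =
        -(deriv (fun z => deriv (G x) z) y) / μt x) := by
    intro x y
    obtain ⟨a, b, h1, h2, ha, hb⟩ := mixed_derivs G hG x y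
    have hval : ∀ w : ℝ, deriv (fun z => Φ x z w) y * 𝓕 x w = -(a + b * w) / μt x := by
      intro w
      have heq : (fun z => Φ x z w) =
          fun z => -(deriv (fun t => F t w) x + deriv (fun t => G t z) x
            + deriv (G x) z * w) / deriv (F x) w := funext fun z => hΦ x z w
      have hd : HasDerivAt (fun z => -(deriv (fun t => F t w) x + deriv (fun t => G t z) x
          + deriv (G x) z * w) / deriv (F x) w)
          (-(0 + a + b * w) / deriv (F x) w) y :=
        (((hasDerivAt_const y (deriv (fun t => F t w) x)).add h1).add
          (h2.mul_const w)).neg.div_const _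
      rw [heq, hd.deriv, h𝓕 x w]
      field_simp [hFv x w]
      ring
    refine ⟨fun w => by rw [hval w, ha, hb], fun v => ?_⟩
    have hfun : (fun w => deriv (fun z => Φ x z w) y * 𝓕 x w) =
        fun w => -(a + b * w) / μt x := funext hval
    have hd : HasDerivAt (fun w : ℝ => -(a + b * w) / μt x) (-b / μt x) v := by
      have := (((hasDerivAt_const v a).add ((hasDerivAt_id v).const_mul b)).neg).div_const (μt x)
      simpa using this
    rw [hfun, hd.deriv, hb]
  constructor
  · intro x y v
    exact (key x y).2 v
  · intro x y v
    rw [(key x y).1 v, (key x y).2 v]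
    field_simp
    ring
end

section
/- Let G : ℝ² → ℝ be three times continuously differentiable, let μ̃ : ℝ → ℝ be differentiable and nonvanishing, and let φ₁, φ₂ : ℝ² → ℝ be differentiable functions satisfying μ̃(x)·φ₁(x,y) = G_yx(x,y) and μ̃(x)·φ₂(x,y) = G_yy(x,y) for all (x,y). Then for all (x,y): μ̃′(x)·φ₂(x,y) = μ̃(x)·( ∂φ₁/∂y(x,y) − ∂φ₂/∂x(x,y) ). In particular, at every point where φ₂(x,y) ≠ 0, the quantity ( ∂φ₁/∂y − ∂φ₂/∂x )/φ₂ equals μ̃′(x)/μ̃(x) and hence does not depend on y, and μ̃ is determined up to a multiplicative constant as an exponential of an integral of this quantity. -/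
open Function

private lemma hdfst {f : ℝ × ℝ → ℝ} {x y : ℝ}
    (hf : DifferentiableAt ℝ f (x, y)) :
    HasDerivAt (fun t => f (t, y)) (fderiv ℝ f (x, y) (1, 0)) x :=
  hf.hasFDerivAt.comp_hasDerivAt x ((hasDerivAt_id x).prodMk (hasDerivAt_const x y))

private lemma hdsnd {f : ℝ × ℝ → ℝ} {x y : ℝ}
    (hf : DifferentiableAt ℝ f (x, y)) :
    HasDerivAt (fun w => f (x, w)) (fderiv ℝ f (x, y) (0, 1)) y :=
  hf.hasFDerivAt.comp_hasDerivAt y ((hasDerivAt_const y x).prodMk (hasDerivAt_id y))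

/-- If `μ̃·φ₁ = G_yx` and `μ̃·φ₂ = G_yy`, then `μ̃′·φ₂ = μ̃·(∂φ₁/∂y − ∂φ₂/∂x)`;
in particular, where `φ₂ ≠ 0`, the quantity `(∂φ₁/∂y − ∂φ₂/∂x)/φ₂` equals
`μ̃′(x)/μ̃(x)` and hence does not depend on `y`. -/
theorem stmt6
    (G : ℝ → ℝ → ℝ) (hG : ContDiff ℝ 3 (Function.uncurry G))
    (μt : ℝ → ℝ) (hμt : Differentiable ℝ μt) (hμt0 : ∀ x, μt x ≠ 0)
    (φ₁ φ₂ : ℝ → ℝ → ℝ)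
    (hφ₁d : Differentiable ℝ (Function.uncurry φ₁))
    (hφ₂d : Differentiable ℝ (Function.uncurry φ₂))
    (hφ₁ : ∀ x y, μt x * φ₁ x y = deriv (fun t => deriv (G t) y) x)
    (hφ₂ : ∀ x y, μt x * φ₂ x y = deriv (fun w => deriv (G x) w) y) :
    (∀ x y : ℝ,
      deriv μt x * φ₂ x y =
        μt x * (deriv (φ₁ x) y - deriv (fun t => φ₂ t y) x)) ∧
    (∀ x y : ℝ, φ₂ x y ≠ 0 →
      (deriv (φ₁ x) y - deriv (fun t => φ₂ t y) x) / φ₂ x y =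
        deriv μt x / μt x) := by
  have hGd : Differentiable ℝ (uncurry G) := hG.differentiable (by norm_num)
  set F : ℝ × ℝ → ℝ := fun p => fderiv ℝ (uncurry G) p (0, 1) with hFdef
  have hF : ContDiff ℝ 2 F :=
    (hG.fderiv_right (by norm_num)).clm_apply contDiff_const
  have hFd : Differentiable ℝ F := hF.differentiable (by norm_num)
  have hF' : ContDiff ℝ 1 (fderiv ℝ F) := hF.fderiv_right (by norm_num)
  have hF'd : Differentiable ℝ (fderiv ℝ F) := hF'.differentiable (by norm_num)
  -- the inner derivative is F
  have key : ∀ t w : ℝ, deriv (G t) w = F (t, w) := by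
    intro t w
    exact (hdsnd (hGd (t, w))).deriv
  -- rewrite hypotheses
  have h1 : ∀ x y, μt x * φ₁ x y = fderiv ℝ F (x, y) (1, 0) := by
    intro x y
    rw [hφ₁ x y]
    have : (fun t => deriv (G t) y) = fun t => F (t, y) := funext fun t => key t y
    rw [this, (hdfst (hFd (x, y))).deriv]
  have h2 : ∀ x y, μt x * φ₂ x y = fderiv ℝ F (x, y) (0, 1) := by
    intro x y
    rw [hφ₂ x y]
    have : (fun w => deriv (G x) w) = fun w => F (x, w) := funext fun w => key x w
    rw [this, (hdsnd (hFd (x, y))).deriv]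
  have main : ∀ x y : ℝ,
      deriv μt x * φ₂ x y =
        μt x * (deriv (φ₁ x) y - deriv (fun t => φ₂ t y) x) := by
    intro x y
    have hφ₁y : DifferentiableAt ℝ (φ₁ x) y :=
      (hφ₁d (x, y)).comp y
        ((differentiableAt_const x).prodMk differentiableAt_id)
    have hφ₂x : DifferentiableAt ℝ (fun t => φ₂ t y) x :=
      by have h := (hφ₂d (x, y)).comp x
                  ((differentiableAt_id : DifferentiableAt ℝ id x).prodMk (differentiableAt_const y)); exact h
    -- differentiate h1 in y
    have A1 : HasDerivAt (fun w => μt x * φ₁ x w) (μt x * deriv (φ₁ x) y) y :=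
      hφ₁y.hasDerivAt.const_mul (μt x)
    have B1 : HasDerivAt (fun w => fderiv ℝ F (x, w) (1, 0))
        (fderiv ℝ (fderiv ℝ F) (x, y) (0, 1) (1, 0)) y := by
      have hc : HasDerivAt (fun w => fderiv ℝ F (x, w))
          (fderiv ℝ (fderiv ℝ F) (x, y) (0, 1)) y :=
        (hF'd (x, y)).hasFDerivAt.comp_hasDerivAt y
          ((hasDerivAt_const y x).prodMk (hasDerivAt_id y))
      simpa using hc.clm_apply (hasDerivAt_const y ((1 : ℝ), (0 : ℝ)))
    have e1 : (fun w => μt x * φ₁ x w) = fun w => fderiv ℝ F (x, w) (1, 0) :=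
      funext fun w => h1 x w
    have E1 : μt x * deriv (φ₁ x) y =
        fderiv ℝ (fderiv ℝ F) (x, y) (0, 1) (1, 0) := by
      refine HasDerivAt.unique ?_ B1
      rw [← e1] at B1 ⊢
      exact A1
    -- differentiate h2 in x
    have A2 : HasDerivAt (fun t => μt t * φ₂ t y)
        (deriv μt x * φ₂ x y + μt x * deriv (fun t => φ₂ t y) x) x :=
      (hμt x).hasDerivAt.mul hφ₂x.hasDerivAt
    have B2 : HasDerivAt (fun t => fderiv ℝ F (t, y) (0, 1))
        (fderiv ℝ (fderiv ℝ F) (x, y) (1, 0) (0, 1)) x := by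
      have hc : HasDerivAt (fun t => fderiv ℝ F (t, y))
          (fderiv ℝ (fderiv ℝ F) (x, y) (1, 0)) x :=
        (hF'd (x, y)).hasFDerivAt.comp_hasDerivAt x
          ((hasDerivAt_id x).prodMk (hasDerivAt_const x y))
      simpa using hc.clm_apply (hasDerivAt_const x ((0 : ℝ), (1 : ℝ)))
    have e2 : (fun t => μt t * φ₂ t y) = fun t => fderiv ℝ F (t, y) (0, 1) :=
      funext fun t => h2 t y
    have E2 : deriv μt x * φ₂ x y + μt x * deriv (fun t => φ₂ t y) x =
        fderiv ℝ (fderiv ℝ F) (x, y) (1, 0) (0, 1) := by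
      refine HasDerivAt.unique ?_ B2
      rw [← e2] at B2 ⊢
      exact A2
    -- symmetry of second derivative
    have hsymm : fderiv ℝ (fderiv ℝ F) (x, y) (0, 1) (1, 0) =
        fderiv ℝ (fderiv ℝ F) (x, y) (1, 0) (0, 1) :=
      second_derivative_symmetric (f := F) (f' := fderiv ℝ F)
        (fun p => (hFd p).hasFDerivAt) ((hF'd (x, y)).hasFDerivAt)
        ((0 : ℝ), (1 : ℝ)) ((1 : ℝ), (0 : ℝ))
    rw [hsymm] at E1
    rw [← E2] at E1
    linarith
  refine ⟨main, fun x y h0 => ?_⟩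
  have := main x y
  rw [div_eq_div_iff h0 (hμt0 x)]
  linear_combination -this
end

section
/- Let F : ℝ² → ℝ be three times continuously differentiable (arguments F(x,v)) with F_v ≠ 0 everywhere, let G : ℝ² → ℝ be continuously differentiable, let μ̃ : ℝ → ℝ be differentiable and nonvanishing, and define Φ(x,y,v) := −(F_x(x,v) + G_x(x,y) + G_y(x,y)·v)/F_v(x,v) and 𝓕(x,v) := F_v(x,v)/μ̃(x). Define φ₃(x,y,v) := −∂/∂v[ Φ(x,y,v)·𝓕(x,v) ] and φ₄(x,v) := ∂𝓕/∂v(x,v). Then: (i) φ₃(x,y,v) = ( F_xv(x,v) + G_y(x,y) )/μ̃(x) and φ₄(x,v) = F_vv(x,v)/μ̃(x); and (ii) μ̃′(x)·φ₄(x,v) = μ̃(x)·( ∂φ₃/∂v(x,y,v) − ∂φ₄/∂x(x,v) ) for all (x,y,v). In particular, wherever φ₄ ≠ 0, (∂φ₃/∂v − ∂φ₄/∂x)/φ₄ = μ̃′(x)/μ̃(x) depends only on x. -/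
private lemma lineSnd (x v : ℝ) : HasDerivAt (fun w : ℝ => ((x, w) : ℝ × ℝ)) (0, 1) v :=
  (hasDerivAt_const v x).prodMk (hasDerivAt_id v)

private lemma lineFst (x v : ℝ) : HasDerivAt (fun t : ℝ => ((t, v) : ℝ × ℝ)) (1, 0) x :=
  (hasDerivAt_id x).prodMk (hasDerivAt_const x v)

private lemma flipc {E : Type*} [NormedAddCommGroup E] [NormedSpace ℝ E]
    {g : ℝ × ℝ → (ℝ × ℝ) →L[ℝ] E} {p : ℝ × ℝ} (hg : DifferentiableAt ℝ g p) (c : ℝ × ℝ) :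
    HasFDerivAt (fun q => g q c) ((fderiv ℝ g p).flip c) p := by
  have := hg.hasFDerivAt.clm_apply (hasFDerivAt_const c p)
  simpa using this

private lemma flipc2 {g : ℝ × ℝ → (ℝ × ℝ) →L[ℝ] (ℝ × ℝ) →L[ℝ] ℝ} {p : ℝ × ℝ}
    (hg : DifferentiableAt ℝ g p) (b c : ℝ × ℝ) :
    HasFDerivAt (fun q => g q b c) (((fderiv ℝ g p).flip b).flip c) p := by
  have h1 := flipc hg b
  have := h1.clm_apply (hasFDerivAt_const c p)
  simpa using this

/-- For `Φ := −(F_x + G_x + G_y·v)/F_v`, `𝓕 := F_v/μ̃`, `φ₃ := −∂/∂v[Φ·𝓕]` and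
`φ₄ := ∂𝓕/∂v`: (i) `φ₃ = (F_xv + G_y)/μ̃` and `φ₄ = F_vv/μ̃`;
(ii) `μ̃′·φ₄ = μ̃·(∂φ₃/∂v − ∂φ₄/∂x)`; in particular wherever `φ₄ ≠ 0`,
`(∂φ₃/∂v − ∂φ₄/∂x)/φ₄ = μ̃′(x)/μ̃(x)` depends only on `x`. -/
theorem stmt7
    (F G : ℝ → ℝ → ℝ)
    (hF : ContDiff ℝ 3 (Function.uncurry F))
    (hG : ContDiff ℝ 1 (Function.uncurry G))
    (hFv : ∀ x v, deriv (F x) v ≠ 0)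
    (μt : ℝ → ℝ) (hμtd : Differentiable ℝ μt) (hμt0 : ∀ x, μt x ≠ 0)
    (Φ : ℝ → ℝ → ℝ → ℝ)
    (hΦ : ∀ x y v, Φ x y v =
      -(deriv (fun t => F t v) x + deriv (fun t => G t y) x + deriv (G x) y * v)
        / deriv (F x) v)
    (𝓕 : ℝ → ℝ → ℝ)
    (h𝓕 : ∀ x v, 𝓕 x v = deriv (F x) v / μt x)
    (φ₃ : ℝ → ℝ → ℝ → ℝ)
    (hφ₃ : ∀ x y v, φ₃ x y v = -(deriv (fun w => Φ x y w * 𝓕 x w) v))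
    (φ₄ : ℝ → ℝ → ℝ)
    (hφ₄ : ∀ x v, φ₄ x v = deriv (𝓕 x) v) :
    (∀ x y v : ℝ,
      φ₃ x y v = (deriv (fun t => deriv (F t) v) x + deriv (G x) y) / μt x ∧
      φ₄ x v = deriv (fun w => deriv (F x) w) v / μt x) ∧
    (∀ x y v : ℝ,
      deriv μt x * φ₄ x v =
        μt x * (deriv (fun w => φ₃ x y w) v - deriv (fun t => φ₄ t v) x)) ∧
    (∀ x y v : ℝ, φ₄ x v ≠ 0 →
      (deriv (fun w => φ₃ x y w) v - deriv (fun t => φ₄ t v) x) / φ₄ x v =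
        deriv μt x / μt x) := by
  set f : ℝ × ℝ → ℝ := Function.uncurry F with hfdef
  set f1 := fderiv ℝ f with hf1def
  set f2 := fderiv ℝ f1 with hf2def
  set f3 := fderiv ℝ f2 with hf3def
  have hf1 : ContDiff ℝ 2 f1 := hF.fderiv_right (by norm_num)
  have hf2 : ContDiff ℝ 1 f2 := hf1.fderiv_right (by norm_num)
  have hdf : Differentiable ℝ f := hF.differentiable (by norm_num)
  have hdf1 : Differentiable ℝ f1 := hf1.differentiable (by norm_num)
  have hdf2 : Differentiable ℝ f2 := hf2.differentiable (by norm_num)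
  -- first partial derivatives
  have hFv' : ∀ x v, HasDerivAt (fun w => F x w) (f1 (x, v) (0, 1)) v := fun x v =>
    (hdf (x, v)).hasFDerivAt.comp_hasDerivAt v (lineSnd x v)
  have e1 : ∀ x v, deriv (F x) v = f1 (x, v) (0, 1) := fun x v => (hFv' x v).deriv
  have hFt : ∀ x v, HasDerivAt (fun t => F t v) (f1 (x, v) (1, 0)) x := fun x v =>
    by have := (hdf (x, v)).hasFDerivAt.comp_hasDerivAt x (lineFst x v); exact this
  have e2 : ∀ x v, deriv (fun t => F t v) x = f1 (x, v) (1, 0) := fun x v => (hFt x v).deriv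
  -- second-level derivative facts
  have hA : ∀ (c : ℝ × ℝ) (x v : ℝ),
      HasDerivAt (fun w => f1 (x, w) c) (f2 (x, v) (0, 1) c) v := fun c x v =>
    (flipc (hdf1 (x, v)) c).comp_hasDerivAt v (lineSnd x v)
  have hAx : ∀ (c : ℝ × ℝ) (x v : ℝ),
      HasDerivAt (fun t => f1 (t, v) c) (f2 (x, v) (1, 0) c) x := fun c x v =>
    by have := (flipc (hdf1 (x, v)) c).comp_hasDerivAt x (lineFst x v); exact this
  -- third-level derivative facts
  have hB : ∀ (a b : ℝ × ℝ) (x v : ℝ),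
      HasDerivAt (fun w => f2 (x, w) a b) (f3 (x, v) (0, 1) a b) v := fun a b x v =>
    (flipc2 (hdf2 (x, v)) a b).comp_hasDerivAt v (lineSnd x v)
  have hBx : ∀ (a b : ℝ × ℝ) (x v : ℝ),
      HasDerivAt (fun t => f2 (t, v) a b) (f3 (x, v) (1, 0) a b) x := fun a b x v =>
    by have := (flipc2 (hdf2 (x, v)) a b).comp_hasDerivAt x (lineFst x v); exact this
  -- symmetry of second derivative of f
  have s2 : ∀ (p : ℝ × ℝ) (a b : ℝ × ℝ), f2 p a b = f2 p b a := fun p a b =>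
    hF.contDiffAt.isSymmSndFDerivAt (by norm_num) a b
  -- symmetry of f3 in first two slots
  have s3 : ∀ (p : ℝ × ℝ) (a b c : ℝ × ℝ), f3 p a b c = f3 p b a c := fun p a b c =>
    DFunLike.congr_fun (hf1.contDiffAt.isSymmSndFDerivAt (by norm_num) a b) c
  -- symmetry of f3 in last two slots
  have s3' : ∀ (p : ℝ × ℝ) (a b c : ℝ × ℝ), f3 p a b c = f3 p a c b := by
    intro p a b c
    have h1 := flipc2 (hdf2 p) b c
    have h2 := flipc2 (hdf2 p) c b
    have heq : (fun q => f2 q b c) = (fun q => f2 q c b) := funext fun q => s2 q b c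
    rw [heq] at h1
    have := h1.unique h2
    exact DFunLike.congr_fun this a
  -- closed form for φ₃
  have hφ₃' : ∀ x y v, φ₃ x y v = (f2 (x, v) (0, 1) (1, 0) + deriv (G x) y) / μt x := by
    intro x y v
    have hprod : (fun w => Φ x y w * 𝓕 x w) = fun w =>
        -((f1 (x, w) (1, 0) + deriv (fun t => G t y) x + deriv (G x) y * w) / μt x) := by
      funext w
      rw [hΦ, h𝓕, e2]
      have hb := hFv x w
      have hc := hμt0 x
      field_simp
    have h2 : HasDerivAt (fun w : ℝ => deriv (G x) y * w) (deriv (G x) y) v := by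
      simpa using (hasDerivAt_id v).const_mul (deriv (G x) y)
    have hD : HasDerivAt (fun w =>
        -((f1 (x, w) (1, 0) + deriv (fun t => G t y) x + deriv (G x) y * w) / μt x))
        (-((f2 (x, v) (0, 1) (1, 0) + deriv (G x) y) / μt x)) v := by
      have := ((((hA (1, 0) x v).add_const (deriv (fun t => G t y) x)).add h2).div_const
        (μt x)).neg
      simpa [add_right_comm, Pi.neg_def] using this
    rw [hφ₃, hprod, hD.deriv, neg_neg]
  -- closed form for φ₄
  have hφ₄' : ∀ x v, φ₄ x v = f2 (x, v) (0, 1) (0, 1) / μt x := by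
    intro x v
    have h𝓕x : 𝓕 x = fun w => f1 (x, w) (0, 1) / μt x := funext fun w => by
      rw [h𝓕, e1]
    have hD : HasDerivAt (fun w => f1 (x, w) (0, 1) / μt x)
        (f2 (x, v) (0, 1) (0, 1) / μt x) v := (hA (0, 1) x v).div_const (μt x)
    rw [hφ₄, h𝓕x, hD.deriv]
  -- derivative of φ₃ in v
  have dφ₃ : ∀ x y v, deriv (fun w => φ₃ x y w) v =
      f3 (x, v) (0, 1) (0, 1) (1, 0) / μt x := by
    intro x y v
    have heq : (fun w => φ₃ x y w) = fun w =>
        (f2 (x, w) (0, 1) (1, 0) + deriv (G x) y) / μt x := funext fun w => hφ₃' x y w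
    have hD : HasDerivAt (fun w => (f2 (x, w) (0, 1) (1, 0) + deriv (G x) y) / μt x)
        (f3 (x, v) (0, 1) (0, 1) (1, 0) / μt x) v :=
      ((hB (0, 1) (1, 0) x v).add_const (deriv (G x) y)).div_const (μt x)
    rw [heq, hD.deriv]
  -- derivative of φ₄ in x
  have dφ₄ : ∀ x v, deriv (fun t => φ₄ t v) x =
      (f3 (x, v) (1, 0) (0, 1) (0, 1) * μt x
        - f2 (x, v) (0, 1) (0, 1) * deriv μt x) / (μt x) ^ 2 := by
    intro x v
    have heq : (fun t => φ₄ t v) = fun t => f2 (t, v) (0, 1) (0, 1) / μt t :=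
      funext fun t => hφ₄' t v
    have hD : HasDerivAt (fun t => f2 (t, v) (0, 1) (0, 1) / μt t)
        ((f3 (x, v) (1, 0) (0, 1) (0, 1) * μt x
          - f2 (x, v) (0, 1) (0, 1) * deriv μt x) / (μt x) ^ 2) x :=
      (hBx (0, 1) (0, 1) x v).div ((hμtd x).hasDerivAt) (hμt0 x)
    rw [heq, hD.deriv]
  -- the symmetry chain for third derivatives
  have sym3 : ∀ x v : ℝ, f3 (x, v) (0, 1) (0, 1) (1, 0) = f3 (x, v) (1, 0) (0, 1) (0, 1) := by
    intro x v
    rw [s3' (x, v) (0, 1) (0, 1) (1, 0), s3 (x, v) (0, 1) (1, 0) (0, 1)]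
  refine ⟨fun x y v => ⟨?_, ?_⟩, fun x y v => ?_, fun x y v h4 => ?_⟩
  · -- φ₃ formula
    have hd : deriv (fun t => deriv (F t) v) x = f2 (x, v) (1, 0) (0, 1) := by
      have heq : (fun t => deriv (F t) v) = fun t => f1 (t, v) (0, 1) :=
        funext fun t => e1 t v
      rw [heq, (hAx (0, 1) x v).deriv]
    rw [hφ₃' x y v, hd, s2 (x, v) (0, 1) (1, 0)]
  · -- φ₄ formula
    have hd : deriv (fun w => deriv (F x) w) v = f2 (x, v) (0, 1) (0, 1) := by
      have heq : (fun w => deriv (F x) w) = fun w => f1 (x, w) (0, 1) :=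
        funext fun w => e1 x w
      rw [heq, (hA (0, 1) x v).deriv]
    rw [hφ₄' x v, hd]
  · -- part (ii)
    rw [hφ₄' x v, dφ₃ x y v, dφ₄ x v, sym3 x v]
    have hc := hμt0 x
    field_simp
    ring
  · -- part (iii)
    have h2 : deriv μt x * φ₄ x v =
        μt x * (deriv (fun w => φ₃ x y w) v - deriv (fun t => φ₄ t v) x) := by
      rw [hφ₄' x v, dφ₃ x y v, dφ₄ x v, sym3 x v]
      have hc := hμt0 x
      field_simp
      ring
    rw [div_eq_div_iff h4 (hμt0 x)]
    linarith [h2]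
end

section
/- Let v : ℝ → ℝ and p : ℝ → ℝ be continuously differentiable and g : ℝ → ℝ be twice continuously differentiable, and define w(x,y) := v(x)·g(y + p(x)). Then for all (x,y): ( w_yy(x,y)·w(x,y) − w_y(x,y)² ) · p′(x) = w_xy(x,y)·w(x,y) − w_x(x,y)·w_y(x,y). In particular, at any point where w_yy·w − w_y² ≠ 0, the ratio (w_xy·w − w_x·w_y)/(w_yy·w − w_y²) equals p′(x). -/
/-- For `w(x,y) = v(x)·g(y + p(x))`, one has
`(w_yy·w − w_y²)·p′ = w_xy·w − w_x·w_y`; in particular, where `w_yy·w − w_y² ≠ 0`,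
the ratio `(w_xy·w − w_x·w_y)/(w_yy·w − w_y²)` equals `p′(x)`. -/
theorem stmt10
    (v p : ℝ → ℝ) (hv : ContDiff ℝ 1 v) (hp : ContDiff ℝ 1 p)
    (g : ℝ → ℝ) (hg : ContDiff ℝ 2 g)
    (w : ℝ → ℝ → ℝ) (hw : ∀ x y, w x y = v x * g (y + p x)) :
    (∀ x y : ℝ,
      (deriv (fun z => deriv (w x) z) y * w x y - (deriv (w x) y) ^ 2) * deriv p x =
        deriv (fun t => deriv (w t) y) x * w x y
          - deriv (fun t => w t y) x * deriv (w x) y) ∧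
    (∀ x y : ℝ,
      deriv (fun z => deriv (w x) z) y * w x y - (deriv (w x) y) ^ 2 ≠ 0 →
      (deriv (fun t => deriv (w t) y) x * w x y
          - deriv (fun t => w t y) x * deriv (w x) y) /
        (deriv (fun z => deriv (w x) z) y * w x y - (deriv (w x) y) ^ 2) =
          deriv p x) := by
  have hv' : Differentiable ℝ v := hv.differentiable one_ne_zero
  have hp' : Differentiable ℝ p := hp.differentiable one_ne_zero
  have hg1 : Differentiable ℝ g := hg.differentiable (by norm_num)
  have hgd : ContDiff ℝ 1 (deriv g) := by
    have := (contDiff_succ_iff_deriv (n := 1)).mp (by exact_mod_cast hg)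
    exact this.2.2
  have hg1' : Differentiable ℝ (deriv g) := hgd.differentiable one_ne_zero
  -- first y-derivative
  have Hy : ∀ x y, HasDerivAt (w x) (v x * deriv g (y + p x)) y := by
    intro x y
    have hinner : HasDerivAt (fun z : ℝ => z + p x) 1 y := (hasDerivAt_id y).add_const _
    have h : HasDerivAt (fun z => v x * g (z + p x)) (v x * deriv g (y + p x)) y := by
      have := (((hg1 (y + p x)).hasDerivAt.comp y hinner)).const_mul (v x)
      simpa using this
    exact h.congr_of_eventuallyEq (Filter.Eventually.of_forall fun z => (hw x z))
  have h1 : ∀ x y, deriv (w x) y = v x * deriv g (y + p x) := fun x y => (Hy x y).deriv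
  -- second y-derivative
  have h2 : ∀ x y, deriv (fun z => deriv (w x) z) y = v x * deriv (deriv g) (y + p x) := by
    intro x y
    have hinner : HasDerivAt (fun z : ℝ => z + p x) 1 y := (hasDerivAt_id y).add_const _
    have h : HasDerivAt (fun z => v x * deriv g (z + p x)) (v x * deriv (deriv g) (y + p x)) y := by
      have := (((hg1' (y + p x)).hasDerivAt.comp y hinner)).const_mul (v x)
      simpa using this
    exact (h.congr_of_eventuallyEq (Filter.Eventually.of_forall fun z => h1 x z)).deriv
  -- x-derivative of w
  have h3 : ∀ x y, deriv (fun t => w t y) x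
      = deriv v x * g (y + p x) + v x * (deriv g (y + p x) * deriv p x) := by
    intro x y
    have hinner : HasDerivAt (fun t => y + p t) (deriv p x) x := (hp' x).hasDerivAt.const_add y
    have hc : HasDerivAt (fun t => g (y + p t)) (deriv g (y + p x) * deriv p x) x :=
      (hg1 (y + p x)).hasDerivAt.comp x hinner
    have h : HasDerivAt (fun t => v t * g (y + p t))
        (deriv v x * g (y + p x) + v x * (deriv g (y + p x) * deriv p x)) x :=
      (hv' x).hasDerivAt.mul hc
    exact (h.congr_of_eventuallyEq (Filter.Eventually.of_forall fun t => hw t y)).deriv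
  -- x-derivative of w_y
  have h4 : ∀ x y, deriv (fun t => deriv (w t) y) x
      = deriv v x * deriv g (y + p x) + v x * (deriv (deriv g) (y + p x) * deriv p x) := by
    intro x y
    have hinner : HasDerivAt (fun t => y + p t) (deriv p x) x := (hp' x).hasDerivAt.const_add y
    have hc : HasDerivAt (fun t => deriv g (y + p t)) (deriv (deriv g) (y + p x) * deriv p x) x :=
      by have := (hg1' (y + p x)).hasDerivAt.comp x hinner; exact this
    have h : HasDerivAt (fun t => v t * deriv g (y + p t))
        (deriv v x * deriv g (y + p x) + v x * (deriv (deriv g) (y + p x) * deriv p x)) x :=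
      (hv' x).hasDerivAt.mul hc
    exact (h.congr_of_eventuallyEq (Filter.Eventually.of_forall fun t => h1 t y)).deriv
  have key : ∀ x y : ℝ,
      (deriv (fun z => deriv (w x) z) y * w x y - (deriv (w x) y) ^ 2) * deriv p x =
        deriv (fun t => deriv (w t) y) x * w x y
          - deriv (fun t => w t y) x * deriv (w x) y := by
    intro x y
    rw [h1, h2, h3, h4, hw]
    ring
  refine ⟨key, fun x y h => ?_⟩
  rw [div_eq_iff h]
  linear_combination -(key x y)
end

section
/- Let B₁ be a nonzero real constant, let Λ : ℝ → ℝ be differentiable, and let Ψ : ℝ² → ℝ (arguments Ψ(x,v)) be twice continuously differentiable, such that for all (x,v): (i) B₁·Λ(x) + Ψ_vv(x,v) = 0, and (ii) 2·Ψ_v(x,v) + Λ′(x) + v·Ψ_vv(x,v) = 0. Then Λ(x) = 0 for all x. -/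
/-- With `g' ≡ a`, the relation `2 g + c + w g' = 0` makes `g` affine of slope `-a/2`,
so `a = -a/2`. -/
lemma eq_zero_of_deriv_eq_const_of_two_mul_add_mul_deriv {g : ℝ → ℝ} {a c : ℝ}
    (hg : ∀ w, deriv g w = a) (h : ∀ w, 2 * g w + c + w * deriv g w = 0) : a = 0 := by
  have g_eq : g = fun w => (-c - w * a) / 2 := by
    funext w
    linear_combination h w / 2 - w / 2 * hg w
  have slope : deriv g 0 = -a / 2 := by
    rw [g_eq]
    refine HasDerivAt.deriv ?_
    simpa using (((hasDerivAt_id (0 : ℝ)).mul_const a).const_sub (-c)).div_const 2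
  linarith [hg 0]

theorem stmt11_general
    (B₁ : ℝ) (hB₁ : B₁ ≠ 0)
    (Λ : ℝ → ℝ)
    (Ψ : ℝ → ℝ → ℝ)
    (h1 : ∀ x v : ℝ, B₁ * Λ x + deriv (fun w => deriv (Ψ x) w) v = 0)
    (h2 : ∀ x v : ℝ,
      2 * deriv (Ψ x) v + deriv Λ x + v * deriv (fun w => deriv (Ψ x) w) v = 0) :
    ∀ x : ℝ, Λ x = 0 := by
  intro x
  have h : -(B₁ * Λ x) = 0 :=
    eq_zero_of_deriv_eq_const_of_two_mul_add_mul_deriv (g := deriv (Ψ x))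
      (fun w => by linear_combination h1 x w) (h2 x)
  exact (mul_eq_zero.mp (neg_eq_zero.mp h)).resolve_left hB₁

/-- If `B₁ ≠ 0`, `B₁·Λ(x) + Ψ_vv(x,v) = 0` and
`2·Ψ_v(x,v) + Λ′(x) + v·Ψ_vv(x,v) = 0` for all `(x,v)`, then `Λ ≡ 0`. -/
theorem stmt11
    (B₁ : ℝ) (hB₁ : B₁ ≠ 0)
    (Λ : ℝ → ℝ) (hΛ : Differentiable ℝ Λ)
    (Ψ : ℝ → ℝ → ℝ) (hΨ : ContDiff ℝ 2 (Function.uncurry Ψ))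
    (h1 : ∀ x v : ℝ, B₁ * Λ x + deriv (fun w => deriv (Ψ x) w) v = 0)
    (h2 : ∀ x v : ℝ,
      2 * deriv (Ψ x) v + deriv Λ x + v * deriv (fun w => deriv (Ψ x) w) v = 0) :
    ∀ x : ℝ, Λ x = 0 :=
  stmt11_general B₁ hB₁ Λ Ψ h1 h2
end

section
/- Let f, g : ℝ → ℝ be continuous, let F be an antiderivative of f and h an antiderivative of x ↦ e^{F(x)}·g(x). Then for every twice differentiable y : ℝ → ℝ and every x: e^{F(x)}·( y″(x) + 2 y(x) y′(x) + f(x)( y′(x) + y(x)² ) − g(x) ) = d/dx [ e^{F(x)}( y′(x) + y(x)² ) − h(x) ]. Consequently, every solution of Kamke's ODE 37, y″ + 2yy′ + f(x)(y′ + y²) − g(x) = 0, on an interval I satisfies e^{F(x)}( y′(x) + y(x)² ) − h(x) = constant on I; i.e. μ(x) = e^{∫f(x)dx} is an integrating factor of this ODE. -/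
lemma aux14 (f g F h : ℝ → ℝ)
    (hF : ∀ x, HasDerivAt F (f x) x)
    (hh : ∀ x, HasDerivAt h (Real.exp (F x) * g x) x)
    (y y' y'' : ℝ → ℝ) (x : ℝ)
    (hy : HasDerivAt y (y' x) x) (hy' : HasDerivAt y' (y'' x) x) :
    HasDerivAt (fun t => Real.exp (F t) * (y' t + (y t) ^ 2) - h t)
      (Real.exp (F x) *
        (y'' x + 2 * y x * y' x + f x * (y' x + (y x) ^ 2) - g x)) x := by
  have h1 : HasDerivAt (fun t => Real.exp (F t)) (Real.exp (F x) * f x) x :=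
    (Real.hasDerivAt_exp (F x)).comp x (hF x)
  have h2 : HasDerivAt (fun t => y' t + (y t) ^ 2)
      (y'' x + 2 * y x * y' x) x := by
    have := hy'.add (hy.pow 2)
    refine this.congr_deriv ?_
    norm_num
  have := (h1.mul h2).sub (hh x)
  refine this.congr_deriv ?_
  ring

/-- Kamke's ODE 37: `μ(x) = e^{∫f}` is an integrating factor of
`y″ + 2yy′ + f(x)(y′ + y²) − g(x) = 0`, with first integral
`e^{F(x)}(y′ + y²) − h(x)` where `F′ = f` and `h′ = e^{F}·g`. -/
theorem stmt14
    (f g F h : ℝ → ℝ)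
    (hf : Continuous f) (hg : Continuous g)
    (hF : ∀ x, HasDerivAt F (f x) x)
    (hh : ∀ x, HasDerivAt h (Real.exp (F x) * g x) x) :
    (∀ y : ℝ → ℝ, Differentiable ℝ y → Differentiable ℝ (deriv y) → ∀ x : ℝ,
      Real.exp (F x) *
          (deriv (deriv y) x + 2 * y x * deriv y x
            + f x * (deriv y x + (y x) ^ 2) - g x) =
        deriv (fun t => Real.exp (F t) * (deriv y t + (y t) ^ 2) - h t) x) ∧
    (∀ (I : Set ℝ), Convex ℝ I → ∀ y y' y'' : ℝ → ℝ,
      (∀ x ∈ I, HasDerivAt y (y' x) x) →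
      (∀ x ∈ I, HasDerivAt y' (y'' x) x) →
      (∀ x ∈ I, y'' x + 2 * y x * y' x + f x * (y' x + (y x) ^ 2) - g x = 0) →
      ∀ x₁ ∈ I, ∀ x₂ ∈ I,
        Real.exp (F x₁) * (y' x₁ + (y x₁) ^ 2) - h x₁ =
          Real.exp (F x₂) * (y' x₂ + (y x₂) ^ 2) - h x₂) := by
  constructor
  · intro y hy hy' x
    exact (aux14 f g F h hF hh y (deriv y) (deriv (deriv y))
      x (hy x).hasDerivAt (hy' x).hasDerivAt).deriv.symm
  · intro I hI y y' y'' hy hy' hode x₁ hx₁ x₂ hx₂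
    set G : ℝ → ℝ := fun t => Real.exp (F t) * (y' t + (y t) ^ 2) - h t with hG
    have hder : ∀ x ∈ I, HasDerivWithinAt G 0 I x := by
      intro x hx
      have := aux14 f g F h hF hh y y' y'' x (hy x hx) (hy' x hx)
      rw [hode x hx, mul_zero] at this
      exact this.hasDerivWithinAt
    have := hI.norm_image_sub_le_of_norm_hasDerivWithin_le
      (C := 0) (fun x hx => (hder x hx).hasFDerivWithinAt)
      (fun x hx => by simp) hx₂ hx₁
    simp only [zero_mul, norm_le_zero_iff, sub_eq_zero] at this
    exact this
end

section
/- Let h : ℝ → ℝ be continuous and nonvanishing, and let Hₐ be an antiderivative of z ↦ (1 − z)/h(z). Let y : I → ℝ be a twice differentiable function on an interval I with y(x) ≠ x for all x ∈ I, satisfying Kamke's ODE 136: y″(x) = h(y′(x))/(x − y(x)). Then the function x ↦ Hₐ(y′(x)) − ln|x − y(x)| is constant on I. Equivalently, μ = (1 − y′)/h(y′) is an integrating factor of this ODE, with first integral Hₐ(y′) − ln|x − y|. -/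
/-- Kamke's ODE 136: along any solution of `y″ = h(y′)/(x − y)` with `y ≠ x`,
the quantity `Hₐ(y′) − ln|x − y|` is constant, where `Hₐ′(z) = (1 − z)/h(z)`;
equivalently `μ = (1 − y′)/h(y′)` is an integrating factor. -/
theorem stmt15
    (h : ℝ → ℝ) (hc : Continuous h) (h0 : ∀ z, h z ≠ 0)
    (Ha : ℝ → ℝ) (hHa : ∀ z, HasDerivAt Ha ((1 - z) / h z) z)
    (I : Set ℝ) (hI : Convex ℝ I)
    (y y' y'' : ℝ → ℝ)
    (hy : ∀ x ∈ I, HasDerivAt y (y' x) x)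
    (hy' : ∀ x ∈ I, HasDerivAt y' (y'' x) x)
    (hne : ∀ x ∈ I, y x ≠ x)
    (hode : ∀ x ∈ I, y'' x = h (y' x) / (x - y x)) :
    ∀ x₁ ∈ I, ∀ x₂ ∈ I,
      Ha (y' x₁) - Real.log |x₁ - y x₁| = Ha (y' x₂) - Real.log |x₂ - y x₂| := by
  intro x₁ h₁ x₂ h₂
  set F : ℝ → ℝ := fun x => Ha (y' x) - Real.log |x - y x| with hF
  have key : ∀ x ∈ I, HasDerivAt F 0 x := by
    intro x hx
    have hsub : x - y x ≠ 0 := sub_ne_zero.2 fun e => hne x hx e.symm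
    have d1 : HasDerivAt (fun x => Ha (y' x)) ((1 - y' x) / h (y' x) * y'' x) x :=
      (hHa (y' x)).comp x (hy' x hx)
    have d2 : HasDerivAt (fun x => x - y x) (1 - y' x) x :=
      (hasDerivAt_id x).sub (hy x hx)
    have d3 : HasDerivAt (fun x => Real.log (x - y x)) ((1 - y' x) / (x - y x)) x := by
      have := (Real.hasDerivAt_log hsub).comp x d2
      simpa [div_eq_mul_inv, mul_comm, Function.comp_def] using this
    have d4 : HasDerivAt (fun x => Real.log |x - y x|) ((1 - y' x) / (x - y x)) x := by
      simpa [Real.log_abs] using d3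
    have hd := d1.sub d4
    have heq : (1 - y' x) / h (y' x) * y'' x - (1 - y' x) / (x - y x) = 0 := by
      rw [hode x hx]
      field_simp
      rw [div_self (h0 _)]
      ring
    rw [heq] at hd
    exact hd
  have bound := hI.norm_image_sub_le_of_norm_hasFDerivWithin_le (C := 0)
    (f' := fun _ => (0 : ℝ →L[ℝ] ℝ))
    (fun x hx => by
      have h' := (key x hx).hasFDerivAt.hasFDerivWithinAt (s := I)
      refine h'.congr_fderiv ?_
      ext v
      simp)
    (fun x hx => by simp) h₁ h₂
  have : ‖F x₂ - F x₁‖ ≤ 0 := by simpa using bound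
  have : F x₂ = F x₁ := by
    have := norm_le_zero_iff.mp this
    linarith [sub_eq_zero.mp this]
  exact this.symm
end

section
/- Let a, b, c be real constants with a ≠ 0, and let y : I → ℝ be a twice differentiable function on an interval I satisfying Kamke's ODE 66: y″(x) = a·( c + b·x + y(x) )·( y′(x)² + 1 )^{3/2}. Then the function x ↦ ( b·y′(x) − 1 )/( a·√(y′(x)² + 1) ) − ( c + b·x + y(x) )²/2 is constant on I. Equivalently, μ = (y′ + b)/( a (y′² + 1)^{3/2} ) is an integrating factor of this ODE. -/
/-- Kamke's ODE 66: along any solution of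
`y″ = a(c + bx + y)(y′² + 1)^{3/2}` (with `a ≠ 0`), the quantity
`(b·y′ − 1)/(a·√(y′² + 1)) − (c + bx + y)²/2` is constant; equivalently
`μ = (y′ + b)/(a(y′² + 1)^{3/2})` is an integrating factor. -/
theorem stmt16
    (a b c : ℝ) (ha : a ≠ 0)
    (I : Set ℝ) (hI : Convex ℝ I)
    (y y' y'' : ℝ → ℝ)
    (hy : ∀ x ∈ I, HasDerivAt y (y' x) x)
    (hy' : ∀ x ∈ I, HasDerivAt y' (y'' x) x)
    (hode : ∀ x ∈ I,
      y'' x = a * (c + b * x + y x) * ((y' x) ^ 2 + 1) ^ ((3 : ℝ) / 2)) :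
    ∀ x₁ ∈ I, ∀ x₂ ∈ I,
      (b * y' x₁ - 1) / (a * Real.sqrt ((y' x₁) ^ 2 + 1))
          - (c + b * x₁ + y x₁) ^ 2 / 2 =
        (b * y' x₂ - 1) / (a * Real.sqrt ((y' x₂) ^ 2 + 1))
          - (c + b * x₂ + y x₂) ^ 2 / 2 := by
  set F : ℝ → ℝ := fun x =>
    (b * y' x - 1) / (a * Real.sqrt ((y' x) ^ 2 + 1))
      - (c + b * x + y x) ^ 2 / 2 with hF
  have key : ∀ x ∈ I, HasDerivAt F 0 x := by
    intro x hx
    have hs : (0:ℝ) < (y' x) ^ 2 + 1 := by positivity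
    have hsq : (0:ℝ) < Real.sqrt ((y' x) ^ 2 + 1) := Real.sqrt_pos.2 hs
    have hsqsq : Real.sqrt ((y' x) ^ 2 + 1) * Real.sqrt ((y' x) ^ 2 + 1)
        = (y' x) ^ 2 + 1 := Real.mul_self_sqrt hs.le
    -- derivative of inner : (y')^2 + 1
    have h1 : HasDerivAt (fun t => (y' t) ^ 2 + 1) (2 * y' x * y'' x) x := by
      have := ((hy' x hx).pow 2).add_const 1
      simpa [mul_comm, mul_assoc, mul_left_comm] using this
    have h2 : HasDerivAt (fun t => Real.sqrt ((y' t) ^ 2 + 1))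
        (2 * y' x * y'' x / (2 * Real.sqrt ((y' x) ^ 2 + 1))) x :=
      h1.sqrt (by positivity)
    have h3 : HasDerivAt (fun t => b * y' t - 1) (b * y'' x) x :=
      ((hy' x hx).const_mul b).sub_const 1
    have h4 : HasDerivAt (fun t => a * Real.sqrt ((y' t) ^ 2 + 1))
        (a * (2 * y' x * y'' x / (2 * Real.sqrt ((y' x) ^ 2 + 1)))) x :=
      h2.const_mul a
    have h5 := h3.div h4 (by positivity)
    have h6 : HasDerivAt (fun t => (c + b * t + y t) ^ 2 / 2)
        ((c + b * x + y x) * (b + y' x)) x := by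
      have hbase : HasDerivAt (fun t => c + b * t + y t) (b + y' x) x := by
        have := (((hasDerivAt_id x).const_mul b).const_add c).add (hy x hx)
        exact this.congr_deriv (by simp)
      have := (hbase.pow 2).div_const 2
      refine this.congr_deriv ?_
      ring
    have h7 := h5.sub h6
    refine h7.congr_deriv ?_
    symm
    rw [hode x hx]
    have hrpow : ((y' x) ^ 2 + 1) ^ ((3:ℝ)/2)
        = ((y' x) ^ 2 + 1) * Real.sqrt ((y' x) ^ 2 + 1) := by
      rw [show (3:ℝ)/2 = 1 + 1/2 by norm_num, Real.rpow_add hs, Real.rpow_one,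
        ← Real.sqrt_eq_rpow]
    rw [hrpow]
    field_simp
    linear_combination (-(c + b * x + y x) * (((y' x) ^ 2 + 1) * b - b - y' x)) * hsqsq
  intro x₁ hx₁ x₂ hx₂
  have := hI.norm_image_sub_le_of_norm_hasFDerivWithin_le
    (f := F) (f' := fun _ => (0 : ℝ →L[ℝ] ℝ)) (C := 0)
    (fun x hx => by
      have h0 : ContinuousLinearMap.toSpanSingleton ℝ (0:ℝ) = 0 := by ext; simp
      have := (key x hx).hasFDerivAt.hasFDerivWithinAt (s := I)
      rwa [h0] at this)
    (fun x hx => by simp) hx₂ hx₁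
  have h0 : ‖F x₁ - F x₂‖ ≤ 0 := by simpa using this
  have : F x₁ = F x₂ := by
    have := norm_sub_eq_zero_iff.mp (le_antisymm h0 (norm_nonneg _))
    exact this
  simpa [hF] using this
end

section
/- Let a, b be real constants, let f : ℝ → ℝ be continuous with antiderivative F, and let y : I → ℝ be a twice differentiable function on an interval I satisfying Kamke's ODE 215 in explicit form: y″ = ( (6y² − a/2)·y′² )/( 4y³ − a·y − b ) − f(x)·y′, with 4y(x)³ − a·y(x) − b > 0 and y′(x) > 0 for all x ∈ I. Then the function x ↦ e^{F(x)}·y′(x)/√( 4y(x)³ − a·y(x) − b ) is constant on I. Equivalently, μ = 1/y′ is an integrating factor of this ODE and ln y′ − (1/2)·ln(4y³ − ay − b) + F(x) is a first integral. -/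
/-- Kamke's ODE 215: along any solution of
`y″ = (6y² − a/2)y′²/(4y³ − ay − b) − f(x)y′` with `4y³ − ay − b > 0` and
`y′ > 0`, the quantity `e^{F(x)}·y′/√(4y³ − ay − b)` is constant (`F′ = f`);
equivalently `μ = 1/y′` is an integrating factor with first integral
`ln y′ − (1/2)ln(4y³ − ay − b) + F(x)`. -/
theorem stmt17
    (a b : ℝ) (f F : ℝ → ℝ)
    (hf : Continuous f) (hF : ∀ x, HasDerivAt F (f x) x)
    (I : Set ℝ) (hI : Convex ℝ I)
    (y y' y'' : ℝ → ℝ)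
    (hy : ∀ x ∈ I, HasDerivAt y (y' x) x)
    (hy' : ∀ x ∈ I, HasDerivAt y' (y'' x) x)
    (hpos : ∀ x ∈ I, 0 < 4 * (y x) ^ 3 - a * y x - b)
    (hy'pos : ∀ x ∈ I, 0 < y' x)
    (hode : ∀ x ∈ I,
      y'' x = (6 * (y x) ^ 2 - a / 2) * (y' x) ^ 2
                / (4 * (y x) ^ 3 - a * y x - b)
              - f x * y' x) :
    ∀ x₁ ∈ I, ∀ x₂ ∈ I,
      Real.exp (F x₁) * y' x₁ / Real.sqrt (4 * (y x₁) ^ 3 - a * y x₁ - b) =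
        Real.exp (F x₂) * y' x₂ / Real.sqrt (4 * (y x₂) ^ 3 - a * y x₂ - b) := by
  set g : ℝ → ℝ := fun x =>
    Real.exp (F x) * y' x / Real.sqrt (4 * (y x) ^ 3 - a * y x - b) with hg
  have key : ∀ x ∈ I, HasDerivWithinAt g 0 I x := by
    intro x hx
    have hP : 0 < 4 * (y x) ^ 3 - a * y x - b := hpos x hx
    have hs : 0 < Real.sqrt (4 * (y x) ^ 3 - a * y x - b) := Real.sqrt_pos.2 hP
    have hsq : Real.sqrt (4 * (y x) ^ 3 - a * y x - b) ^ 2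
        = 4 * (y x) ^ 3 - a * y x - b := Real.sq_sqrt hP.le
    -- derivative of P
    have hyx : HasDerivWithinAt y (y' x) I x := (hy x hx).hasDerivWithinAt
    have hPd : HasDerivWithinAt (fun x => 4 * (y x) ^ 3 - a * y x - b)
        ((12 * (y x) ^ 2 - a) * y' x) I x := by
      have h1 : HasDerivWithinAt (fun x => (y x) ^ 3) (3 * (y x) ^ 2 * y' x) I x := by
        simpa using hyx.fun_pow 3
      have := ((h1.const_mul 4).fun_sub (hyx.const_mul a)).sub_const b
      refine this.congr_deriv ?_; ring
    -- derivative of sqrt ∘ P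
    have hSd : HasDerivWithinAt
        (fun x => Real.sqrt (4 * (y x) ^ 3 - a * y x - b))
        ((1 / (2 * Real.sqrt (4 * (y x) ^ 3 - a * y x - b)))
          * ((12 * (y x) ^ 2 - a) * y' x)) I x :=
      (Real.hasDerivAt_sqrt hP.ne').comp_hasDerivWithinAt x hPd
    -- derivative of numerator
    have hNd : HasDerivWithinAt (fun x => Real.exp (F x) * y' x)
        (Real.exp (F x) * f x * y' x + Real.exp (F x) * y'' x) I x := by
      have hE : HasDerivWithinAt (fun x => Real.exp (F x))
          (Real.exp (F x) * f x) I x := ((hF x).exp.hasDerivWithinAt)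
      simpa using hE.fun_mul ((hy' x hx).hasDerivWithinAt)
    have hq := hNd.fun_div hSd hs.ne'
    refine hq.congr_deriv ?_
    rw [hode x hx]
    set s := Real.sqrt (4 * (y x) ^ 3 - a * y x - b) with hsdef
    rw [← hsq]
    field_simp
    ring
  intro x₁ h₁ x₂ h₂
  have hb : ∀ x ∈ I, ‖(0 : ℝ)‖ ≤ 0 := fun x _ => by simp
  have := hI.norm_image_sub_le_of_norm_hasDerivWithin_le (C := 0)
    (fun x hx => key x hx) (fun x hx => by simp) h₂ h₁
  have : ‖g x₁ - g x₂‖ ≤ 0 := by simpa using this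
  have : g x₁ = g x₂ := by
    have := norm_sub_eq_zero_iff.mp (le_antisymm this (norm_nonneg _))
    exact this
  simpa [hg] using this
end

section
/- Let p be a real constant and g : ℝ → ℝ continuously differentiable. Let y : I → ℝ be twice differentiable with y(x) > 0 on an interval I, satisfying y″ − y′²/y − g(x)·p·y^p·y′ − g′(x)·y^{p+1} = 0 on I. Then the function x ↦ y′(x)/y(x) − g(x)·y(x)^p is constant on I; i.e. μ = 1/y is an integrating factor and the first integral y′/y − g(x)·y^p = −C₁ is a first order ODE of Bernoulli type. In particular the whole family is integrable by quadratures for arbitrary g. -/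
/-- The González-Gascón & González-López family: along any positive solution of
`y″ − y′²/y − g(x)·p·y^p·y′ − g′(x)·y^{p+1} = 0`, the quantity
`y′/y − g(x)·y^p` is constant; i.e. `μ = 1/y` is an integrating factor and the
first integral is a Bernoulli-type first order ODE, so the family is integrable
by quadratures for arbitrary `g`. -/
theorem stmt18
    (p : ℝ) (g : ℝ → ℝ) (hg : ContDiff ℝ 1 g)
    (I : Set ℝ) (hI : Convex ℝ I)
    (y y' y'' : ℝ → ℝ)
    (hy : ∀ x ∈ I, HasDerivAt y (y' x) x)
    (hy' : ∀ x ∈ I, HasDerivAt y' (y'' x) x)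
    (hpos : ∀ x ∈ I, 0 < y x)
    (hode : ∀ x ∈ I,
      y'' x - (y' x) ^ 2 / y x - g x * p * (y x) ^ p * y' x
        - deriv g x * (y x) ^ (p + 1) = 0) :
    ∀ x₁ ∈ I, ∀ x₂ ∈ I,
      y' x₁ / y x₁ - g x₁ * (y x₁) ^ p = y' x₂ / y x₂ - g x₂ * (y x₂) ^ p := by
  intro x₁ hx₁ x₂ hx₂
  set F : ℝ → ℝ := fun x => y' x / y x - g x * (y x) ^ p with hF
  have key : ∀ x ∈ I, HasDerivAt F 0 x := by
    intro x hx
    have hyne : y x ≠ 0 := (hpos x hx).ne'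
    have hgd : HasDerivAt g (deriv g x) x :=
      ((hg.differentiable one_ne_zero) x).hasDerivAt
    have h1 : HasDerivAt (fun x => y' x / y x)
        ((y'' x * y x - y' x * y' x) / (y x) ^ 2) x :=
      (hy' x hx).div (hy x hx) hyne
    have h2 : HasDerivAt (fun x => (y x) ^ p)
        (y' x * p * (y x) ^ (p - 1)) x :=
      (hy x hx).rpow_const (Or.inl hyne)
    have h3 : HasDerivAt (fun x => g x * (y x) ^ p)
        (deriv g x * (y x) ^ p + g x * (y' x * p * (y x) ^ (p - 1))) x :=
      hgd.mul h2
    have h4 := h1.sub h3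
    have hode' := hode x hx
    have e1 : (y x) ^ (p + 1) = (y x) ^ p * y x := by
      rw [Real.rpow_add_one hyne]
    have e2 : (y x) ^ (p - 1) = (y x) ^ p / y x := by
      rw [Real.rpow_sub_one hyne]
    have hyy : y'' x = (y' x) ^ 2 / y x + g x * p * (y x) ^ p * y' x
        + deriv g x * (y x) ^ (p + 1) := by linarith
    have : (y'' x * y x - y' x * y' x) / (y x) ^ 2
        - (deriv g x * (y x) ^ p + g x * (y' x * p * (y x) ^ (p - 1))) = 0 := by
      rw [hyy, e1, e2]
      field_simp
      ring
    rw [this] at h4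
    exact h4
  have h := hI.norm_image_sub_le_of_norm_hasDerivWithin_le (C := 0)
    (f := F) (f' := fun _ => (0 : ℝ))
    (fun x hx => (key x hx).hasDerivWithinAt)
    (fun x hx => by simp) hx₂ hx₁
  simp only [Real.norm_eq_abs, zero_mul] at h
  have := abs_nonpos_iff.mp h
  have : F x₁ = F x₂ := by linarith [abs_nonneg (F x₁ - F x₂), sub_eq_zero.mp this]
  simpa [hF] using this
end

section
/- Let F, G, H : ℝ → ℝ be continuous with H nonvanishing, and let 𝐅, 𝐆, 𝐇 be antiderivatives of F, G, H respectively. Let y : I → ℝ be a twice differentiable function on an interval I satisfying Kamke's ODE 235 in explicit form: y″(x) = −( G(y(x))·y′(x) + F(x) )/H(y′(x)). Then the function x ↦ 𝐇(y′(x)) + 𝐆(y(x)) + 𝐅(x) is constant on I; i.e. μ = H(y′) is an integrating factor with first integral ∫^{y′} H(z)dz + ∫^{y} G(z)dz + ∫ F(x)dx. -/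
/-- Kamke's ODE 235: along any solution of `y″ = −(G(y)y′ + F(x))/H(y′)` with
`H` nonvanishing, the quantity `𝐇(y′) + 𝐆(y) + 𝐅(x)` is constant, where
`Fa = 𝐅, Ga = 𝐆, Ha = 𝐇` are antiderivatives of `F, G, H`; i.e. `μ = H(y′)` is
an integrating factor with first integral `∫^{y′}H + ∫^{y}G + ∫F`. -/
theorem stmt19
    (F G H : ℝ → ℝ)
    (hFc : Continuous F) (hGc : Continuous G) (hHc : Continuous H)
    (hH0 : ∀ v, H v ≠ 0)
    (Fa Ga Ha : ℝ → ℝ)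
    (hFa : ∀ x, HasDerivAt Fa (F x) x)
    (hGa : ∀ z, HasDerivAt Ga (G z) z)
    (hHa : ∀ v, HasDerivAt Ha (H v) v)
    (I : Set ℝ) (hI : Convex ℝ I)
    (y y' y'' : ℝ → ℝ)
    (hy : ∀ x ∈ I, HasDerivAt y (y' x) x)
    (hy' : ∀ x ∈ I, HasDerivAt y' (y'' x) x)
    (hode : ∀ x ∈ I, y'' x = -(G (y x) * y' x + F x) / H (y' x)) :
    ∀ x₁ ∈ I, ∀ x₂ ∈ I,
      Ha (y' x₁) + Ga (y x₁) + Fa x₁ = Ha (y' x₂) + Ga (y x₂) + Fa x₂ := by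
  intro x₁ h₁ x₂ h₂
  set Φ : ℝ → ℝ := fun x => Ha (y' x) + Ga (y x) + Fa x with hΦ
  have key : ∀ x ∈ I, HasDerivWithinAt Φ 0 I x := by
    intro x hx
    have hd : HasDerivAt Φ (H (y' x) * y'' x + G (y x) * y' x + F x) x := by
      exact (((hHa (y' x)).comp x (hy' x hx)).add
        ((hGa (y x)).comp x (hy x hx))).add (hFa x)
    have hz : H (y' x) * y'' x + G (y x) * y' x + F x = 0 := by
      rw [hode x hx]
      field_simp [hH0 (y' x)]
      ring
    rw [hz] at hd
    exact hd.hasDerivWithinAt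
  have := hI.norm_image_sub_le_of_norm_hasDerivWithin_le key
    (C := 0) (by simp) h₂ h₁
  have h0 : ‖Φ x₁ - Φ x₂‖ ≤ 0 := by simpa using this
  have := norm_nonneg (Φ x₁ - Φ x₂)
  have : Φ x₁ = Φ x₂ := by
    have := le_antisymm h0 (norm_nonneg _)
    rwa [norm_eq_zero, sub_eq_zero] at this
  simpa [hΦ] using this
end
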